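/- Let q be a prime power, k ≥ 2, and let K be an (n,s)-arc in PG(k−1,q). Let λ_i denote the number of points P with K(P) = i. Then, as an identity of integers, the sum over all hyperplanes H of the binomial coefficient C(s − K(H), 2) equals C(s,2)·[k]_q − n·(s−1)·[k−1]_q + C(n,2)·[k−2]_q + q^{k−2}·Σ_{i≥2} C(i,2)·λ_i, where [j]_q = (q^j − 1)/(q − 1). -/

import Mathlib

open Module

/-- The set of subspaces of the vector space `F^k` of (algebraic) dimension `j`;
for `j = 1` these are the points of `PG(k-1, q)`, for `j = 2` the lines, and
for `j = k - 1` the hyperplanes. -/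
abbrev PSub (F : Type*) [Field F] (v k : ℕ) :=
  {S : Submodule F (Fin v → F) // Module.finrank F S = k}

/-- The multiplicity `K(S)` of a subspace `S` with respect to the arc `K`. -/
noncomputable def pmult {F : Type*} [Field F] {v : ℕ}
    (K : PSub F v 1 → ℕ) (S : Submodule F (Fin v → F)) : ℕ :=
  ∑ᶠ (P : PSub F v 1) (_ : P.1 ≤ S), K P

/-- The cardinality `#K` of the arc `K`. -/
noncomputable def pcard {F : Type*} [Field F] {v : ℕ} (K : PSub F v 1 → ℕ) : ℕ :=
  ∑ᶠ P : PSub F v 1, K P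

/-- `[j]_q = (q^j - 1)/(q - 1)` (so `[0]_q = 0`). -/
def gauss (q j : ℕ) : ℕ := (q ^ j - 1) / (q - 1)

/-! Double counting against hyperplanes. By duality, the hyperplanes of `PG(k-1,q)` through a
subspace of dimension `d` correspond to the points of its annihilator, so there are
`[k-d]_q` of them. Hence `∑_H K(H) = n [k-1]_q`, and, since two distinct points span a line,
`∑_H K(H)^2 = n^2 [k-2]_q + q^(k-2) ∑_P K(P)^2`. Expanding
`C(s - K(H), 2) = C(s,2) - K(H)(s-1) + C(K(H),2)` and summing over `H` gives the identity. -/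

open Finset

lemma gauss_eq_sum_range {q : ℕ} (hq : 2 ≤ q) (j : ℕ) :
    gauss q j = ∑ i ∈ range j, q ^ i :=
  (Nat.geomSum_eq hq j).symm

lemma gauss_succ {q : ℕ} (hq : 2 ≤ q) (j : ℕ) : gauss q (j + 1) = gauss q j + q ^ j := by
  rw [gauss_eq_sum_range hq, gauss_eq_sum_range hq, sum_range_succ]

lemma gauss_sub_one {q j : ℕ} (hq : 2 ≤ q) (hj : 2 ≤ j) :
    gauss q (j - 1) = gauss q (j - 2) + q ^ (j - 2) := by
  rw [show j - 1 = j - 2 + 1 by omega, gauss_succ hq]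

lemma choose_two_mul_two (m : ℕ) : (m.choose 2 : ℤ) * 2 = m * (m - 1) := by
  induction m with
  | zero => simp
  | succ m ih =>
    rw [Nat.choose_succ_succ, Nat.choose_one_right]
    push_cast at ih ⊢
    linarith

lemma choose_two_sub {m s : ℕ} (h : m ≤ s) :
    ((s - m).choose 2 : ℤ) = s.choose 2 - m * (s - 1) + m.choose 2 := by
  have := choose_two_mul_two s
  have := choose_two_mul_two m
  have := choose_two_mul_two (s - m)
  push_cast [h] at *
  linarith

section Counting

variable {F : Type*} [Field F] [Finite F] {V : Type*} [AddCommGroup V] [Module F V]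

lemma Submodule.card_points_le (X : Submodule F V) :
    Nat.card {P : Submodule F V // P ≤ X ∧ finrank F P = 1} =
      gauss (Nat.card F) (finrank F X) := by
  have e : {P : Submodule F V // P ≤ X ∧ finrank F P = 1} ≃ Projectivization F X :=
    (Equiv.subtypeSubtypeEquivSubtypeInter (· ≤ X) (finrank F · = 1)).symm.trans <|
      ((Submodule.MapSubtype.orderIso X).toEquiv.subtypeEquiv fun P => by
        rw [← Submodule.finrank_map_subtype_eq X P]; rfl).symm.trans
      (Projectivization.equivSubmodule F X).symm
  rw [Nat.card_congr e, Projectivization.card_of_finrank F X rfl,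
    gauss_eq_sum_range Finite.one_lt_card]

variable [FiniteDimensional F V]

lemma Submodule.card_hyperplanes_ge (hV : 1 ≤ finrank F V) (W : Submodule F V) :
    Nat.card {H : Submodule F V // finrank F H = finrank F V - 1 ∧ W ≤ H} =
      gauss (Nat.card F) (finrank F V - finrank F W) := by
  have e : {H : Submodule F V // finrank F H = finrank F V - 1 ∧ W ≤ H} ≃
      {L : Submodule F (Module.Dual F V) // L ≤ W.dualAnnihilator ∧ finrank F L = 1} :=
    Subspace.orderIsoFiniteDimensional.toEquiv.subtypeEquiv fun H => by
      have := Subspace.finrank_add_finrank_dualAnnihilator_eq H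
      have : finrank F H ≤ finrank F V := H.finrank_le
      change _ ↔ H.dualAnnihilator ≤ _ ∧ finrank F H.dualAnnihilator = 1
      rw [Subspace.dualAnnihilator_le_dualAnnihilator_iff, and_comm]
      exact and_congr_right fun _ => by omega
  rw [Nat.card_congr e, Submodule.card_points_le]
  have := Subspace.finrank_add_finrank_dualAnnihilator_eq W
  congr 1
  omega

end Counting

lemma Submodule.finrank_sup_eq_two {F V : Type*} [Field F] [AddCommGroup V] [Module F V]
    [FiniteDimensional F V] {P Q : Submodule F V} (hP : finrank F P = 1) (hQ : finrank F Q = 1)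
    (hPQ : P ≠ Q) : finrank F ↥(P ⊔ Q) = 2 := by
  have hlt : P ⊓ Q < P := inf_le_left.lt_of_ne fun h =>
    hPQ (Submodule.eq_of_le_of_finrank_eq (inf_eq_left.1 h) (hP.trans hQ.symm))
  have := Submodule.finrank_lt_finrank_of_lt hlt
  have := Submodule.finrank_sup_add_finrank_inf_eq P Q
  omega

lemma finsum_mul_card_fiber {α R : Type*} [Fintype α] [CommSemiring R] (f : α → ℕ)
    (g : ℕ → R) :
    ∑ᶠ i, g i * Nat.card {a // f a = i} = ∑ a, g (f a) := by
  classical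
  rw [sum_comp, finsum_eq_sum_of_support_subset (s := univ.image f)]
  · refine sum_congr rfl fun i _ => ?_
    rw [Nat.card_eq_fintype_card, Fintype.card_subtype, nsmul_eq_mul, mul_comm]
  · intro i hi
    obtain ⟨⟨a, rfl⟩⟩ : Nonempty {a // f a = i} := by
      by_contra h
      simp_all
    simp

noncomputable instance PSub.instFintype {F : Type*} [Field F] [Finite F] {v j : ℕ} :
    Fintype (PSub F v j) :=
  Fintype.ofFinite _

section Arc

open scoped Classical

variable {F : Type*} [Field F] [Finite F] {v : ℕ}

lemma PSub.card_hyperplanes_ge (hv : 1 ≤ v) (W : Submodule F (Fin v → F)) :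
    Nat.card {H : PSub F v (v - 1) // W ≤ H.1} = gauss (Nat.card F) (v - finrank F W) := by
  have := Submodule.card_hyperplanes_ge (F := F) (by simpa using hv) W
  rw [finrank_fin_fun] at this
  rw [← this, Nat.card_congr (Equiv.subtypeSubtypeEquivSubtypeInter _ _)]

lemma PSub.sum_hyperplanes_ite_le (hv : 1 ≤ v) (W : Submodule F (Fin v → F)) (a : ℤ) :
    ∑ H : PSub F v (v - 1), (if W ≤ H.1 then a else 0) =
      a * gauss (Nat.card F) (v - finrank F W) := by
  rw [← sum_filter, sum_const, ← PSub.card_hyperplanes_ge hv, Nat.card_eq_fintype_card,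
    Fintype.card_subtype, nsmul_eq_mul, mul_comm]

lemma PSub.card_hyperplanes (hv : 1 ≤ v) :
    Fintype.card (PSub F v (v - 1)) = gauss (Nat.card F) v := by
  simpa using PSub.sum_hyperplanes_ite_le (F := F) hv ⊥ 1

variable (K : PSub F v 1 → ℕ)

lemma pmult_eq_sum (S : Submodule F (Fin v → F)) :
    (pmult K S : ℤ) = ∑ P, if P.1 ≤ S then (K P : ℤ) else 0 := by
  rw [pmult, finsum_eq_sum_of_fintype, Nat.cast_sum]
  exact sum_congr rfl fun P _ => by rw [finsum_eq_if]; split_ifs <;> rfl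

lemma pcard_eq_sum : (pcard K : ℤ) = ∑ P, (K P : ℤ) := by
  rw [pcard, finsum_eq_sum_of_fintype, Nat.cast_sum]

lemma sum_pmult_hyperplanes (hv : 1 ≤ v) :
    ∑ H : PSub F v (v - 1), (pmult K H.1 : ℤ) = pcard K * gauss (Nat.card F) (v - 1) := by
  simp_rw [pmult_eq_sum, pcard_eq_sum, sum_mul]
  rw [sum_comm]
  refine sum_congr rfl fun P _ => ?_
  rw [PSub.sum_hyperplanes_ite_le hv, P.2]

lemma PSub.gauss_sub_finrank_sup (hv : 2 ≤ v) (P Q : PSub F v 1) :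
    (gauss (Nat.card F) (v - finrank F ↥(P.1 ⊔ Q.1)) : ℤ) =
      gauss (Nat.card F) (v - 2) + if P = Q then (Nat.card F : ℤ) ^ (v - 2) else 0 := by
  by_cases hPQ : P = Q
  · rw [hPQ, sup_idem, Q.2, if_pos rfl]
    exact_mod_cast gauss_sub_one Finite.one_lt_card hv
  · rw [Submodule.finrank_sup_eq_two P.2 Q.2 (Subtype.coe_injective.ne hPQ), if_neg hPQ, add_zero]

lemma sum_pmult_sq_hyperplanes (hv : 2 ≤ v) :
    ∑ H : PSub F v (v - 1), (pmult K H.1 : ℤ) ^ 2 =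
      pcard K ^ 2 * gauss (Nat.card F) (v - 2) +
        (Nat.card F : ℤ) ^ (v - 2) * ∑ P, (K P : ℤ) ^ 2 := by
  calc ∑ H : PSub F v (v - 1), (pmult K H.1 : ℤ) ^ 2
      = ∑ P, ∑ Q, ∑ H : PSub F v (v - 1),
          if P.1 ⊔ Q.1 ≤ H.1 then (K P : ℤ) * K Q else 0 := by
        simp_rw [sq, pmult_eq_sum, sum_mul_sum, ite_zero_mul_ite_zero, sup_le_iff]
        rw [sum_comm]
        exact sum_congr rfl fun P _ => sum_comm
    _ = ∑ P, ∑ Q, (K P : ℤ) * K Q * (gauss (Nat.card F) (v - 2) +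
          if P = Q then (Nat.card F : ℤ) ^ (v - 2) else 0) := by
        simp_rw [PSub.sum_hyperplanes_ite_le (by omega : 1 ≤ v), PSub.gauss_sub_finrank_sup hv]
    _ = _ := by
        simp_rw [mul_add, sum_add_distrib, mul_ite, mul_zero, sum_ite_eq, mem_univ, if_true,
          pcard_eq_sum, sq, sum_mul_sum, sum_mul, mul_sum]
        exact congrArg _ (sum_congr rfl fun _ _ => mul_comm _ _)

lemma sum_choose_two_pmult_hyperplanes (hv : 2 ≤ v) :
    ∑ H : PSub F v (v - 1), ((pmult K H.1).choose 2 : ℤ) =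
      (pcard K).choose 2 * gauss (Nat.card F) (v - 2) +
        (Nat.card F : ℤ) ^ (v - 2) * ∑ P, ((K P).choose 2 : ℤ) := by
  apply mul_right_cancel₀ (two_ne_zero (α := ℤ))
  rw [sum_mul, add_mul, mul_right_comm _ _ (2 : ℤ), mul_assoc _ _ (2 : ℤ), sum_mul]
  simp_rw [choose_two_mul_two, mul_sub, mul_one, ← sq, sum_sub_distrib]
  rw [sum_pmult_sq_hyperplanes K hv, sum_pmult_hyperplanes K (by omega),
    gauss_sub_one Finite.one_lt_card hv, ← pcard_eq_sum]
  push_cast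
  ring

end Arc

theorem stmt14_general {F : Type*} [Field F] [Fintype F] (q : ℕ) (hq : Fintype.card F = q)
    {k : ℕ} (hk : 2 ≤ k) (n s : ℕ)
    (K : PSub F k 1 → ℕ) (hn : pcard K = n)
    (hs : ∀ H : PSub F k (k - 1), pmult K H.1 ≤ s) :
    (∑ᶠ H : PSub F k (k - 1), ((s - pmult K H.1).choose 2 : ℤ)) =
      (s.choose 2 : ℤ) * (gauss q k : ℤ)
        - (n : ℤ) * ((s : ℤ) - 1) * (gauss q (k - 1) : ℤ)
        + (n.choose 2 : ℤ) * (gauss q (k - 2) : ℤ)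
        + (q : ℤ) ^ (k - 2) *
            ∑ᶠ i : ℕ, (i.choose 2 : ℤ) * (Nat.card {P : PSub F k 1 // K P = i} : ℤ) := by
  rw [← hq, ← Nat.card_eq_fintype_card, finsum_eq_sum_of_fintype,
    finsum_mul_card_fiber K fun i => (i.choose 2 : ℤ)]
  calc ∑ H : PSub F k (k - 1), ((s - pmult K H.1).choose 2 : ℤ)
      = ∑ H : PSub F k (k - 1), ((s.choose 2 : ℤ) - pmult K H.1 * (s - 1) +
          (pmult K H.1).choose 2) := sum_congr rfl fun H _ => choose_two_sub (hs H)
    _ = _ := by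
      rw [sum_add_distrib, sum_sub_distrib, sum_const, card_univ, PSub.card_hyperplanes (by omega),
        nsmul_eq_mul, ← sum_mul, sum_pmult_hyperplanes K (by omega),
        sum_choose_two_pmult_hyperplanes K hk, hn]
      ring

/-- For an `(n,s)`-arc `K` in `PG(k-1,q)`, with `λ_i` the number of points of
multiplicity `i`,
`∑_H C(s - K(H), 2) = C(s,2)[k]_q - n(s-1)[k-1]_q + C(n,2)[k-2]_q
  + q^(k-2) ∑_{i} C(i,2) λ_i`. -/
theorem stmt14 {F : Type*} [Field F] [Fintype F] (q : ℕ) (hq : Fintype.card F = q)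
    {k : ℕ} (hk : 2 ≤ k) (n s : ℕ)
    (K : PSub F k 1 → ℕ) (hn : pcard K = n)
    (hs : ∀ H : PSub F k (k - 1), pmult K H.1 ≤ s)
    (hs' : ∃ H : PSub F k (k - 1), pmult K H.1 = s) :
    (∑ᶠ H : PSub F k (k - 1), ((s - pmult K H.1).choose 2 : ℤ)) =
      (s.choose 2 : ℤ) * (gauss q k : ℤ)
        - (n : ℤ) * ((s : ℤ) - 1) * (gauss q (k - 1) : ℤ)
        + (n.choose 2 : ℤ) * (gauss q (k - 2) : ℤ)
        + (q : ℤ) ^ (k - 2) *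
            ∑ᶠ i : ℕ, (i.choose 2 : ℤ) * (Nat.card {P : PSub F k 1 // K P = i} : ℤ) :=
  stmt14_general q hq hk n s K hn hs
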